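/- arXiv:1408.0163 — 9 statements merged into one kernel-verified Lean document; each statement's English description precedes it below -/
import Mathlib

section
/- Let n and m be positive integers with 2m ≤ n, let a_1,…,a_n be real numbers, and set C(t) = Σ_{j=1}^n a_j cos(jt) and S(t) = Σ_{j=1}^n a_j sin(jt). Suppose t_1,…,t_m are pairwise distinct points of the open interval (0,π) and γ is a real number such that S(t_1) = … = S(t_m) = 0 and C(t_1) = … = C(t_m) = γ. Then there exist real numbers α_m, α_{m+1}, …, α_{n−m} with α_m = −2^m γ such that for every real t one has C(t) = γ + (∏_{j=1}^m (cos t − cos t_j)) · Σ_{k=m}^{n−m} α_k cos(kt) and S(t) = (∏_{j=1}^m (cos t − cos t_j)) · Σ_{k=m}^{n−m} α_k sin(kt). -/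
/-!
The real polynomial `p(z) = ∑ a_j z^j - γ` vanishes at `e^{± i t_k}`, so `p = d q` with
`d = ∏ (z² - 2 cos t_k z + 1)`, these quadratics being the pairwise coprime minimal polynomials
of the `e^{i t_k}`. For `z = e^{ix}` one has `z² - 2 cos t z + 1 = 2z (cos x - cos t)`, hence
`p(e^{ix}) = ∏ (cos x - cos t_k) · r(e^{ix})` with `r = 2^m X^m q`, and the real and imaginary
parts of this identity are the two claimed factorizations, with `α_k` the coefficients of `r`.
Since `d(0) = 1`, `α_m = 2^m q(0) = 2^m p(0) = -2^m γ`.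
-/

open Real Finset Polynomial Complex

lemma aeval_eq_sum_of_support_subset {R A : Type*} [CommSemiring R] [Semiring A] [Algebra R A]
    {p : R[X]} {s : Finset ℕ} (hs : p.support ⊆ s) (x : A) :
    aeval x p = ∑ k ∈ s, algebraMap R A (p.coeff k) * x ^ k := by
  rw [aeval_def, eval₂_eq_sum, sum_eq_of_subset _ (by simp) hs]

lemma isCoprime_X_sq_sub_C_mul_X_add_one {K : Type*} [Field K] {c c' : K} (h : c ≠ c') :
    IsCoprime (X ^ 2 - C c * X + 1 : K[X]) (X ^ 2 - C c' * X + 1) := by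
  have hu : (C c' - C c) * C (c' - c)⁻¹ = (1 : K[X]) := by
    rw [← C_sub, ← C_mul, mul_inv_cancel₀ (sub_ne_zero.2 h.symm), C_1]
  refine ⟨1 - C (c' - c)⁻¹ * (X - C c), C (c' - c)⁻¹ * (X - C c), ?_⟩
  linear_combination (-(X * (X - C c))) * hu

lemma monic_X_sq_sub_C_mul_X_add_one {R : Type*} [CommRing R] [Nontrivial R] (c : R) :
    (X ^ 2 - C c * X + 1 : R[X]).Monic := by
  monicity!

lemma natDegree_X_sq_sub_C_mul_X_add_one {R : Type*} [CommRing R] [Nontrivial R] (c : R) :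
    (X ^ 2 - C c * X + 1 : R[X]).natDegree = 2 := by
  compute_degree!

lemma support_X_pow_mul_subset_Icc {R : Type*} [CommSemiring R] {d q : R[X]} {m n : ℕ}
    (hd : d.Monic) (hdeg : d.natDegree = 2 * m) (hn : (d * q).natDegree ≤ n) :
    (X ^ m * q).support ⊆ Finset.Icc m (n - m) := by
  intro k hk
  simp only [mem_support_iff, coeff_X_pow_mul', ne_eq, ite_eq_right_iff, not_forall] at hk
  obtain ⟨hmk, hk⟩ := hk
  have hq : q ≠ 0 := by rintro rfl; simp at hk
  have := le_natDegree_of_ne_zero hk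
  rw [hd.natDegree_mul' hq] at hn
  exact Finset.mem_Icc.2 ⟨hmk, by omega⟩

lemma sum_mul_exp_mul_I_pow (s : Finset ℕ) (b : ℕ → ℝ) (x : ℝ) :
    ∑ k ∈ s, (b k : ℂ) * exp (x * I) ^ k =
      ⟨∑ k ∈ s, b k * Real.cos (k * x), ∑ k ∈ s, b k * Real.sin (k * x)⟩ := by
  rw [mk_eq_add_mul_I]
  push_cast
  rw [Finset.sum_mul, ← Finset.sum_add_distrib]
  refine Finset.sum_congr rfl fun k _ => ?_
  rw [← Complex.exp_nat_mul, ← mul_assoc, exp_mul_I]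
  ring

lemma aeval_exp_mul_I_of_support_subset {p : ℝ[X]} {s : Finset ℕ} (hs : p.support ⊆ s) (x : ℝ) :
    aeval (exp (x * I)) p =
      ⟨∑ k ∈ s, p.coeff k * Real.cos (k * x), ∑ k ∈ s, p.coeff k * Real.sin (k * x)⟩ := by
  rw [aeval_eq_sum_of_support_subset hs, ← sum_mul_exp_mul_I_pow]
  rfl

lemma aeval_exp_mul_I_quadratic (x θ : ℝ) :
    aeval (exp (x * I)) (X ^ 2 - C (2 * Real.cos θ) * X + 1 : ℝ[X]) =
      2 * exp (x * I) * (Real.cos x - Real.cos θ : ℝ) := by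
  have hinv : exp (x * I) * exp (-x * I) = 1 := by rw [← Complex.exp_add]; simp
  have hcos : exp (x * I) + exp (-x * I) = 2 * Real.cos x := by
    rw [ofReal_cos, Complex.cos]; ring_nf
  simp only [map_add, map_sub, map_mul, map_pow, aeval_C, aeval_X, map_one,
    Complex.coe_algebraMap]
  push_cast at hcos ⊢
  linear_combination (-1 : ℂ) * hinv + exp (x * I) * hcos

lemma aeval_exp_mul_I_prod_quadratic {ι : Type*} [Fintype ι] (t : ι → ℝ) (x : ℝ) :
    aeval (exp (x * I)) (∏ i, (X ^ 2 - C (2 * Real.cos (t i)) * X + 1 : ℝ[X])) =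
      (2 * exp (x * I)) ^ Fintype.card ι * ↑(∏ i, (Real.cos x - Real.cos (t i))) := by
  simp_rw [map_prod, aeval_exp_mul_I_quadratic, Finset.prod_mul_distrib, Finset.prod_const,
    ofReal_prod, Finset.card_univ, mul_pow]

lemma quadratic_dvd_of_aeval_exp_mul_I_eq_zero {p : ℝ[X]} {θ : ℝ} (hθ : θ ∈ Set.Ioo 0 π)
    (h : aeval (exp (θ * I)) p = 0) : X ^ 2 - C (2 * Real.cos θ) * X + 1 ∣ p := by
  have him : (exp (θ * I)).im ≠ 0 := by
    rw [exp_ofReal_mul_I_im]; exact (Real.sin_pos_of_pos_of_lt_pi hθ.1 hθ.2).ne'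
  simpa [exp_ofReal_mul_I_re, Complex.norm_exp_ofReal_mul_I] using
    p.quadratic_dvd_of_aeval_eq_zero_im_ne_zero h him

lemma prod_quadratic_dvd_of_aeval_exp_mul_I_eq_zero {ι : Type*} [Fintype ι] {t : ι → ℝ}
    (ht : ∀ i, t i ∈ Set.Ioo 0 π) (htinj : Function.Injective t) {p : ℝ[X]}
    (h : ∀ i, aeval (exp (t i * I)) p = 0) :
    ∏ i, (X ^ 2 - C (2 * Real.cos (t i)) * X + 1) ∣ p := by
  refine Fintype.prod_dvd_of_coprime (fun i j hij => ?_) fun i =>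
    quadratic_dvd_of_aeval_exp_mul_I_eq_zero (ht i) (h i)
  refine isCoprime_X_sq_sub_C_mul_X_add_one fun hcos => hij (htinj ?_)
  exact injOn_cos (Set.Ioo_subset_Icc_self (ht i)) (Set.Ioo_subset_Icc_self (ht j))
    (by linarith)

lemma exists_aeval_exp_mul_I_eq_prod_cos_sub_mul {ι : Type*} [Fintype ι] {t : ι → ℝ}
    (ht : ∀ i, t i ∈ Set.Ioo 0 π) (htinj : Function.Injective t) {p : ℝ[X]} {n : ℕ}
    (hp : p.natDegree ≤ n) (h : ∀ i, aeval (exp (t i * I)) p = 0) :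
    ∃ r : ℝ[X], r.support ⊆ Finset.Icc (Fintype.card ι) (n - Fintype.card ι) ∧
      r.coeff (Fintype.card ι) = 2 ^ Fintype.card ι * p.coeff 0 ∧
      ∀ x : ℝ, aeval (exp (x * I)) p =
        ↑(∏ i, (Real.cos x - Real.cos (t i))) * aeval (exp (x * I)) r := by
  set d : ℝ[X] := ∏ i, (X ^ 2 - C (2 * Real.cos (t i)) * X + 1)
  have hd : d.Monic := monic_prod_of_monic _ _ fun i _ => monic_X_sq_sub_C_mul_X_add_one _
  have hd_deg : d.natDegree = 2 * Fintype.card ι := by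
    rw [natDegree_prod_of_monic _ _ fun i _ => monic_X_sq_sub_C_mul_X_add_one _]
    simp_rw [natDegree_X_sq_sub_C_mul_X_add_one]
    simp [mul_comm]
  have hd_coeff : d.coeff 0 = 1 := by simp [d, coeff_zero_eq_eval_zero, eval_prod]
  obtain ⟨q, rfl⟩ : d ∣ p := prod_quadratic_dvd_of_aeval_exp_mul_I_eq_zero ht htinj h
  refine ⟨(2 : ℝ) ^ Fintype.card ι • (X ^ Fintype.card ι * q),
    (support_smul _ _).trans (support_X_pow_mul_subset_Icc hd hd_deg hp), ?_, fun x => ?_⟩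
  · simp [coeff_X_pow_mul', mul_coeff_zero, hd_coeff]
  · rw [map_mul, aeval_exp_mul_I_prod_quadratic, map_smul, map_mul, map_pow, aeval_X,
      Complex.real_smul]
    push_cast
    ring

theorem stmt_0_general (n m : ℕ) (a : ℕ → ℝ)
    (t : Fin m → ℝ) (ht : ∀ i, t i ∈ Set.Ioo 0 π) (htinj : Function.Injective t)
    (γ : ℝ)
    (hS : ∀ i, ∑ j ∈ Finset.Icc 1 n, a j * Real.sin (j * t i) = 0)
    (hC : ∀ i, ∑ j ∈ Finset.Icc 1 n, a j * Real.cos (j * t i) = γ) :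
    ∃ α : ℕ → ℝ, α m = -(2 : ℝ) ^ m * γ ∧
      (∀ x : ℝ,
        (∑ j ∈ Finset.Icc 1 n, a j * Real.cos (j * x)) =
          γ + (∏ i, (Real.cos x - Real.cos (t i))) *
            ∑ k ∈ Finset.Icc m (n - m), α k * Real.cos (k * x)) ∧
      (∀ x : ℝ,
        (∑ j ∈ Finset.Icc 1 n, a j * Real.sin (j * x)) =
          (∏ i, (Real.cos x - Real.cos (t i))) *
            ∑ k ∈ Finset.Icc m (n - m), α k * Real.sin (k * x)) := by
  set p : ℝ[X] := ∑ j ∈ Finset.Icc 1 n, C (a j) * X ^ j - C γ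
  have hp_aeval (x : ℝ) : aeval (exp (x * I)) p =
      ⟨∑ j ∈ Finset.Icc 1 n, a j * Real.cos (j * x),
        ∑ j ∈ Finset.Icc 1 n, a j * Real.sin (j * x)⟩ - γ := by
    simp only [p, map_sub, map_sum, map_mul, map_pow, aeval_C, aeval_X, Complex.coe_algebraMap]
    rw [sum_mul_exp_mul_I_pow]
  have hp_deg : p.natDegree ≤ n :=
    (natDegree_sub_le _ _).trans <| max_le (natDegree_sum_le_of_forall_le _ _ fun j hj =>
      (natDegree_C_mul_X_pow_le _ _).trans (Finset.mem_Icc.1 hj).2) (by simp)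
  obtain ⟨r, hr, hr_coeff, hpr⟩ := exists_aeval_exp_mul_I_eq_prod_cos_sub_mul ht htinj hp_deg
    fun i => by rw [hp_aeval, hS, hC, mk_eq_add_mul_I]; simp
  rw [Fintype.card_fin] at hr hr_coeff
  refine ⟨r.coeff, by simp [hr_coeff, p, coeff_X_pow], fun x => ?_, fun x => ?_⟩
  · have h := congrArg re (hpr x)
    rw [hp_aeval, aeval_exp_mul_I_of_support_subset hr, sub_re, ofReal_re, re_ofReal_mul] at h
    linarith
  · have h := congrArg im (hpr x)
    rwa [hp_aeval, aeval_exp_mul_I_of_support_subset hr, sub_im, ofReal_im, sub_zero,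
      im_ofReal_mul] at h

/-- Factorization theorem for conjugate trigonometric polynomials. -/
theorem stmt_0 (n m : ℕ) (hm : 0 < m) (hnm : 2 * m ≤ n) (a : ℕ → ℝ)
    (t : Fin m → ℝ) (ht : ∀ i, t i ∈ Set.Ioo 0 π) (htinj : Function.Injective t)
    (γ : ℝ)
    (hS : ∀ i, ∑ j ∈ Finset.Icc 1 n, a j * Real.sin (j * t i) = 0)
    (hC : ∀ i, ∑ j ∈ Finset.Icc 1 n, a j * Real.cos (j * t i) = γ) :
    ∃ α : ℕ → ℝ, α m = -(2 : ℝ) ^ m * γ ∧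
      (∀ x : ℝ,
        (∑ j ∈ Finset.Icc 1 n, a j * Real.cos (j * x)) =
          γ + (∏ i, (Real.cos x - Real.cos (t i))) *
            ∑ k ∈ Finset.Icc m (n - m), α k * Real.cos (k * x)) ∧
      (∀ x : ℝ,
        (∑ j ∈ Finset.Icc 1 n, a j * Real.sin (j * x)) =
          (∏ i, (Real.cos x - Real.cos (t i))) *
            ∑ k ∈ Finset.Icc m (n - m), α k * Real.sin (k * x)) :=
  stmt_0_general n m a t ht htinj γ hS hC
end

section
/- Let n be a positive integer, let a_1,…,a_n be complex numbers, and let F(z) = a_1 z + a_2 z² + … + a_n z^n. Then the image F(𝔻) of the open unit disc 𝔻 = {z ∈ ℂ : |z| < 1} under F contains the open disc centered at the origin of radius (1/2^n) · Σ_{j=1}^n |a_j|; that is, every w ∈ ℂ with |w| < (1/2^n) · Σ_{j=1}^n |a_j| satisfies w = F(z) for some z with |z| < 1. -/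
/-!
If `w` is not a value of `F` on the unit disc, every root of `F - w` has modulus at least `1`.
By Vieta's formulas each coefficient of `F - w` is bounded by `|lead| · eₖ(|r₁|, …, |r_d|)`, so the
sum of the moduli of all coefficients is at most `|lead| · ∏ (1 + |rᵢ|) ≤ 2ᵈ · |lead| · ∏ |rᵢ|`,
which is `2ᵈ · |w|` because the constant coefficient is `-w`.
-/

open Finset Polynomial

namespace Multiset

variable {K : Type*} [NormedField K]

theorem norm_esymm_le (s : Multiset K) (k : ℕ) :
    ‖s.esymm k‖ ≤ (s.map (‖·‖)).esymm k := by
  rw [esymm, esymm, powersetCard_map, map_map]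
  refine (norm_multiset_sum_le _).trans_eq ?_
  simp only [map_map, Function.comp_def]
  exact congrArg _ (map_congr rfl fun t _ => map_multiset_prod (normHom : K →*₀ ℝ) t)

theorem esymm_card {R : Type*} [CommSemiring R] (s : Multiset R) : s.esymm (card s) = s.prod := by
  simp [esymm, powersetCard_self]

theorem sum_range_esymm_eq_prod_one_add {R : Type*} [CommSemiring R] (s : Multiset R) :
    ∑ k ∈ Finset.range (card s + 1), s.esymm k = (s.map (1 + ·)).prod := by
  simpa [eval_multiset_prod, eval_finsetSum, add_comm] using
    (congrArg (eval 1) (prod_X_add_C_eq_sum_esymm s)).symm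

theorem prod_map_one_add_le_two_pow_mul_prod (s : Multiset ℝ) (hs : ∀ x ∈ s, 1 ≤ x) :
    (s.map (1 + ·)).prod ≤ 2 ^ card s * s.prod := by
  calc (s.map (1 + ·)).prod ≤ (s.map (2 * ·)).prod :=
        prod_map_le_prod_map₀ _ _ (fun x hx => by linarith [hs x hx])
          (fun x hx => by linarith [hs x hx])
    _ = 2 ^ card s * s.prod := by rw [prod_map_mul, map_const', prod_replicate, map_id']

end Multiset

namespace Polynomial

variable {K : Type*} [NormedField K] {p : K[X]}

theorem norm_coeff_le_norm_leadingCoeff_mul_esymm (hsplit : p.Splits) {k : ℕ}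
    (hk : k ≤ p.natDegree) :
    ‖p.coeff k‖ ≤ ‖p.leadingCoeff‖ * (p.roots.map (‖·‖)).esymm (p.natDegree - k) := by
  rw [coeff_eq_esymm_roots_of_splits hsplit hk, norm_mul, norm_mul, norm_pow, norm_neg,
    norm_one, one_pow, mul_one]
  gcongr
  exact p.roots.norm_esymm_le _

theorem norm_coeff_zero_eq_mul_prod_norm_roots (hsplit : p.Splits) :
    ‖p.coeff 0‖ = ‖p.leadingCoeff‖ * (p.roots.map (‖·‖)).prod := by
  rw [coeff_eq_esymm_roots_of_splits hsplit (Nat.zero_le _), Nat.sub_zero,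
    ← splits_iff_card_roots.mp hsplit, Multiset.esymm_card, norm_mul, norm_mul, norm_pow,
    norm_neg, norm_one, one_pow, mul_one]
  exact congrArg _ (map_multiset_prod (normHom : K →*₀ ℝ) _)

theorem sum_norm_coeff_le_two_pow_natDegree_mul (hsplit : p.Splits)
    (hroots : ∀ z ∈ p.roots, 1 ≤ ‖z‖) :
    ∑ k ∈ range (p.natDegree + 1), ‖p.coeff k‖ ≤ 2 ^ p.natDegree * ‖p.coeff 0‖ := by
  set t := p.roots.map (‖·‖)
  have hcard : Multiset.card t = p.natDegree := by
    rw [Multiset.card_map, splits_iff_card_roots.mp hsplit]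
  have ht : ∀ x ∈ t, 1 ≤ x := Multiset.forall_mem_map_iff.mpr hroots
  calc ∑ k ∈ range (p.natDegree + 1), ‖p.coeff k‖
      ≤ ∑ k ∈ range (p.natDegree + 1), ‖p.leadingCoeff‖ * t.esymm (p.natDegree - k) :=
        sum_le_sum fun k hk =>
          norm_coeff_le_norm_leadingCoeff_mul_esymm hsplit (Nat.lt_succ_iff.mp (mem_range.mp hk))
    _ = ‖p.leadingCoeff‖ * (t.map (1 + ·)).prod := by
        have hreflect := sum_range_reflect t.esymm (p.natDegree + 1)
        rw [add_tsub_cancel_right] at hreflect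
        rw [← mul_sum, hreflect, ← hcard, t.sum_range_esymm_eq_prod_one_add]
    _ ≤ ‖p.leadingCoeff‖ * (2 ^ p.natDegree * t.prod) := by
        rw [← hcard]
        gcongr
        exact t.prod_map_one_add_le_two_pow_mul_prod ht
    _ = 2 ^ p.natDegree * ‖p.coeff 0‖ := by
        rw [norm_coeff_zero_eq_mul_prod_norm_roots hsplit]
        ring

theorem exists_isRoot_norm_lt_one (hsplit : p.Splits) {N : ℕ} (hN : p.natDegree ≤ N)
    (hcoeff : 2 ^ N * ‖p.coeff 0‖ < ∑ k ∈ range (N + 1), ‖p.coeff k‖) :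
    ∃ z, ‖z‖ < 1 ∧ p.IsRoot z := by
  by_contra! hroots
  have hsum : ∑ k ∈ range (N + 1), ‖p.coeff k‖ = ∑ k ∈ range (p.natDegree + 1), ‖p.coeff k‖ :=
    (sum_subset (range_subset_range.2 (by omega)) fun k _ hk => by
      rw [coeff_eq_zero_of_natDegree_lt (by simpa using hk), norm_zero]).symm
  have hbound := sum_norm_coeff_le_two_pow_natDegree_mul hsplit
    fun z hz => not_lt.mp fun hz1 => hroots z hz1 (mem_roots'.mp hz).2
  have hpow : (2 : ℝ) ^ p.natDegree ≤ 2 ^ N := pow_le_pow_right₀ one_le_two hN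
  nlinarith [norm_nonneg (p.coeff 0)]

end Polynomial

theorem stmt_1_general (n : ℕ) (a : ℕ → ℂ) (w : ℂ)
    (hw : ‖w‖ < (1 / 2 ^ n) * ∑ j ∈ Finset.Icc 1 n, ‖a j‖) :
    ∃ z : ℂ, ‖z‖ < 1 ∧ ∑ j ∈ Finset.Icc 1 n, a j * z ^ j = w := by
  set p : ℂ[X] := ∑ j ∈ Icc 1 n, C (a j) * X ^ j - C w
  have hcoeff : ∀ j ∈ Icc 1 n, p.coeff j = a j := fun j hj => by
    have hj0 : j ≠ 0 := by rw [mem_Icc] at hj; omega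
    simp [p, coeff_C, coeff_X_pow, hj, hj0]
  have hcoeff0 : p.coeff 0 = -w := by
    simp [p, coeff_C, coeff_X_pow]
  have hdeg : p.natDegree ≤ n :=
    (natDegree_sub_le _ _).trans (max_le (natDegree_sum_le_of_forall_le _ _ fun j hj =>
      (natDegree_C_mul_X_pow_le _ _).trans (mem_Icc.mp hj).2) (by simp))
  have hlarge : 2 ^ n * ‖p.coeff 0‖ < ∑ k ∈ range (n + 1), ‖p.coeff k‖ :=
    calc 2 ^ n * ‖p.coeff 0‖ < ∑ j ∈ Icc 1 n, ‖a j‖ := by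
          rwa [hcoeff0, norm_neg, ← lt_div_iff₀' (by positivity), ← one_div_mul_eq_div]
      _ = ∑ j ∈ Icc 1 n, ‖p.coeff j‖ := sum_congr rfl fun j hj => by rw [hcoeff j hj]
      _ ≤ ∑ k ∈ range (n + 1), ‖p.coeff k‖ :=
          sum_le_sum_of_subset_of_nonneg (fun j hj => by simp only [mem_Icc, mem_range] at hj ⊢; omega)
            fun _ _ _ => norm_nonneg _
  obtain ⟨z, hz, hroot⟩ := exists_isRoot_norm_lt_one (IsAlgClosed.splits p) hdeg hlarge
  refine ⟨z, hz, ?_⟩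
  simpa [p, eval_finsetSum, sub_eq_zero] using hroot

/-- The image of the unit disc under `F(z) = a₁ z + ⋯ + aₙ zⁿ` contains the
open disc centered at the origin of radius `(1/2ⁿ) · Σ |aⱼ|`. -/
theorem stmt_1 (n : ℕ) (hn : 0 < n) (a : ℕ → ℂ) (w : ℂ)
    (hw : ‖w‖ < (1 / 2 ^ n) * ∑ j ∈ Finset.Icc 1 n, ‖a j‖) :
    ∃ z : ℂ, ‖z‖ < 1 ∧ ∑ j ∈ Finset.Icc 1 n, a j * z ^ j = w :=
  stmt_1_general n a w hw
end

section
/- Let n be a positive integer, let a_1,…,a_n be complex numbers not all zero, and let F(z) = Σ_{j=1}^n a_j z^j. If γ ∈ ℂ is a value not attained by F on the open unit disc 𝔻 = {z ∈ ℂ : |z| < 1} (i.e., F(z) ≠ γ for all |z| < 1), then |γ| ≥ (1/(2^n − 1)) · Σ_{j=1}^n |a_j|. -/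
/-!
Put `P = γ - F`. Since `F` omits `γ` on the disc, every root of `P` has modulus at least `1`,
so the Mahler measure `M(P)` is `‖P(0)‖ = ‖γ‖`. The coefficient bound
`‖P.coeff k‖ ≤ (deg P).choose k * M(P)` then gives `‖a k‖ ≤ n.choose k * ‖γ‖`, and summing over
`1 ≤ k ≤ n` yields the factor `2 ^ n - 1`.
-/

open Finset Polynomial

theorem Nat.sum_Icc_one_choose (n : ℕ) : ∑ k ∈ Icc 1 n, n.choose k = 2 ^ n - 1 := by
  have h := Nat.sum_range_choose n
  rw [Nat.range_succ_eq_Icc_zero, ← insert_Icc_add_one_left_eq_Icc n.zero_le, zero_add,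
    sum_insert (by simp), Nat.choose_zero_right] at h
  omega

namespace Polynomial

variable {p : ℂ[X]}

theorem mahlerMeasure_eq_norm_coeff_zero (hp : ∀ z ∈ p.roots, 1 ≤ ‖z‖) :
    p.mahlerMeasure = ‖p.coeff 0‖ := by
  have hmax : p.roots.map (fun z ↦ max 1 ‖z‖) = p.roots.map (‖·‖) :=
    Multiset.map_congr rfl fun z hz ↦ max_eq_right (hp z hz)
  rw [mahlerMeasure_eq_leadingCoeff_mul_prod_roots, hmax,
    (IsAlgClosed.splits p).coeff_zero_eq_leadingCoeff_mul_prod_roots, norm_mul, norm_mul,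
    norm_pow, norm_neg, norm_one, one_pow, one_mul]
  exact congrArg _ (map_multiset_prod (normHom : ℂ →*₀ ℝ) p.roots).symm

theorem norm_coeff_le_choose_mul_norm_coeff_zero (hp : ∀ z ∈ p.roots, 1 ≤ ‖z‖) (k : ℕ) :
    ‖p.coeff k‖ ≤ p.natDegree.choose k * ‖p.coeff 0‖ :=
  mahlerMeasure_eq_norm_coeff_zero hp ▸ norm_coeff_le_choose_mul_mahlerMeasure k p

theorem sum_norm_coeff_Icc_le (hp : ∀ z ∈ p.roots, 1 ≤ ‖z‖) {n : ℕ} (hn : p.natDegree ≤ n) :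
    ∑ k ∈ Icc 1 n, ‖p.coeff k‖ ≤ (2 ^ n - 1) * ‖p.coeff 0‖ := by
  calc ∑ k ∈ Icc 1 n, ‖p.coeff k‖
      ≤ ∑ k ∈ Icc 1 n, (n.choose k : ℝ) * ‖p.coeff 0‖ := by
        refine sum_le_sum fun k _ ↦ (norm_coeff_le_choose_mul_norm_coeff_zero hp k).trans ?_
        gcongr
    _ = (2 ^ n - 1) * ‖p.coeff 0‖ := by
        rw [← sum_mul, ← Nat.cast_sum, Nat.sum_Icc_one_choose, Nat.cast_sub Nat.one_le_two_pow]
        norm_num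

end Polynomial

theorem stmt_2_general (n : ℕ) (a : ℕ → ℂ) (γ : ℂ)
    (hγ : ∀ z : ℂ, ‖z‖ < 1 → ∑ j ∈ Finset.Icc 1 n, a j * z ^ j ≠ γ) :
    (1 / (2 ^ n - 1)) * ∑ j ∈ Finset.Icc 1 n, ‖a j‖ ≤ ‖γ‖ := by
  set F : ℂ[X] := ∑ j ∈ Icc 1 n, C (a j) * X ^ j
  have hF_coeff (k : ℕ) : F.coeff k = if k ∈ Icc 1 n then a k else 0 := by
    simp [F, finsetSum_coeff]
  set P : ℂ[X] := C γ - F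
  have hP_roots : ∀ z ∈ P.roots, 1 ≤ ‖z‖ := by
    intro z hz
    by_contra! hz1
    refine hγ z hz1 ?_
    have hFz : F.eval z = γ := by
      have hPz : P.eval z = 0 := isRoot_of_mem_roots hz
      rwa [eval_sub, eval_C, sub_eq_zero, eq_comm] at hPz
    simpa [F, eval_finsetSum] using hFz
  have hP_deg : P.natDegree ≤ n :=
    (natDegree_sub_le _ _).trans <| max_le (by simp) <| natDegree_sum_le_of_forall_le _ _
      fun j hj ↦ (natDegree_C_mul_X_pow_le _ _).trans (mem_Icc.mp hj).2
  have hP_coeff_zero : P.coeff 0 = γ := by simp [P, hF_coeff]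
  have hP_coeff (k : ℕ) (hk : k ∈ Icc 1 n) : ‖P.coeff k‖ = ‖a k‖ := by
    have hk0 : k ≠ 0 := Nat.one_le_iff_ne_zero.mp (mem_Icc.mp hk).1
    simp [P, hF_coeff, hk, coeff_C, hk0]
  have hsum := sum_norm_coeff_Icc_le hP_roots hP_deg
  rw [sum_congr rfl hP_coeff, hP_coeff_zero] at hsum
  rw [one_div_mul_eq_div]
  exact div_le_of_le_mul₀ (sub_nonneg.2 (one_le_pow₀ one_le_two)) (norm_nonneg _)
    (hsum.trans_eq (mul_comm _ _))

/-- If `γ` is not attained by `F(z) = Σ_{j=1}^n aⱼ zʲ` on the open unit disc,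
then `|γ| ≥ (1/(2ⁿ − 1)) · Σ |aⱼ|`. -/
theorem stmt_2 (n : ℕ) (hn : 0 < n) (a : ℕ → ℂ)
    (hne : ∃ j ∈ Finset.Icc 1 n, a j ≠ 0) (γ : ℂ)
    (hγ : ∀ z : ℂ, ‖z‖ < 1 → ∑ j ∈ Finset.Icc 1 n, a j * z ^ j ≠ γ) :
    (1 / (2 ^ n - 1)) * ∑ j ∈ Finset.Icc 1 n, ‖a j‖ ≤ ‖γ‖ :=
  stmt_2_general n a γ hγ
end

section
/- Let n be a positive integer and let a_1,…,a_n be real numbers with Σ_{j=1}^n a_j = 1. If Σ_{j=1}^n a_j sin(jt) ≥ 0 for all t ∈ (0,π), then Σ_{j=1}^n (−1)^j a_j ≤ −tan²(π/(2(n+1))); that is, the value of C(t) = Σ_{j=1}^n a_j cos(jt) at t = π is at most −tan²(π/(2(n+1))). -/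
/-!
Put `N = n + 1`, `K = ⌊N / 2⌋`, `c = cos (π / N)`, and take the nodes `ψ_l = (2l + 1)π / N`,
`l < K`, in `(0, π)` with the weights `w_l = (c - cos ψ_l) / sin ψ_l`, nonnegative because
`ψ_l ≥ π / N`. Telescoping evaluates `∑_l cos (m ψ_l)` for `0 < m < N`, and since
`w_l sin ψ_l = c - cos ψ_l`, the sums `∑_l w_l sin (j ψ_l)` follow by a two-step recurrence in `j`.
Summed against the `a_j` this gives
  `N ∑_j a_j ((-1)^j (1 + c) + 1 - c) = 2 (N - 2K) (1 + c) S'(π) - 4 ∑_l w_l S(ψ_l)`,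
where the first term is the contribution of the missing node `π` when `N` is odd. Both terms are
`≤ 0`: `S ≥ 0` at the nodes, and `S'(π) ≤ 0` as `S ≥ 0` on `(0, π)` with `S(π) = 0`. Since
`∑ a_j = 1`, this is `∑ (-1)^j a_j ≤ -(1 - c) / (1 + c) = -tan² (π / (2N))`.
-/

open Real Finset

theorem two_mul_sin_mul_sum_cos_odd_mul (x : ℝ) (K : ℕ) :
    2 * sin x * ∑ l ∈ range K, cos ((2 * l + 1) * x) = sin (2 * K * x) := by
  induction K with
  | zero => simp
  | succ K ih =>
    rw [sum_range_succ, mul_add, ih, two_mul_sin_mul_cos]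
    push_cast
    rw [show x - (2 * K + 1) * x = -(2 * K * x) by ring, sin_neg]
    ring_nf

theorem div_sin_mul_sin_add_sub_sin_sub (c : ℝ) {ψ : ℝ} (hψ : sin ψ ≠ 0) (t : ℝ) :
    (c - cos ψ) / sin ψ * (sin (t + ψ) - sin (t - ψ)) =
      2 * c * cos t - (cos (t + ψ) + cos (t - ψ)) := by
  rw [sin_add, sin_sub, cos_add, cos_sub]
  field_simp
  ring

theorem tan_sq_half (x : ℝ) : tan (x / 2) ^ 2 = (1 - cos x) / (1 + cos x) := by
  have h := cos_sq (x / 2)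
  rw [show 2 * (x / 2) = x by ring] at h
  rw [tan_eq_sin_div_cos, div_pow, sin_sq, h]
  field_simp
  ring

theorem HasDerivAt.nonpos_of_eq_zero_of_nonneg_left {f : ℝ → ℝ} {f' a b : ℝ}
    (hf : HasDerivAt f f' b) (hfb : f b = 0) (hab : a < b) (hf0 : ∀ t ∈ Set.Ioo a b, 0 ≤ f t) :
    f' ≤ 0 := by
  refine le_of_tendsto (hasDerivAt_iff_tendsto_slope_left_right.1 hf).1 ?_
  filter_upwards [Ioo_mem_nhdsLT hab] with t ht
  rw [slope_def_field, hfb, sub_zero]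
  exact div_nonpos_of_nonneg_of_nonpos (hf0 t ht) (by linarith [ht.2])

theorem sum_neg_one_pow_mul_nat_mul_nonpos (s : Finset ℕ) (a : ℕ → ℝ)
    (hpos : ∀ t ∈ Set.Ioo (0 : ℝ) π, 0 ≤ ∑ j ∈ s, a j * sin (j * t)) :
    ∑ j ∈ s, (-1) ^ j * j * a j ≤ 0 := by
  have hderiv : HasDerivAt (fun t ↦ ∑ j ∈ s, a j * sin (j * t))
      (∑ j ∈ s, (-1) ^ j * j * a j) π := by
    refine (HasDerivAt.fun_sum fun (j : ℕ) _ ↦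
      (((hasDerivAt_id π).const_mul (j : ℝ)).sin).const_mul (a j)).congr_deriv
        (sum_congr rfl fun j _ ↦ ?_)
    simp only [id, mul_one, cos_nat_mul_pi]
    ring
  refine hderiv.nonpos_of_eq_zero_of_nonneg_left ?_ pi_pos hpos
  simp [sin_nat_mul_pi]

noncomputable def node (N l : ℕ) : ℝ := (2 * l + 1) * (π / N)

noncomputable def weight (N l : ℕ) : ℝ := (cos (π / N) - cos (node N l)) / sin (node N l)

theorem node_mem_Ioo {N l : ℕ} (hl : 2 * l + 1 < N) : node N l ∈ Set.Ioo 0 π := by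
  have hN : (0 : ℝ) < N := by exact_mod_cast (show 0 < N by omega)
  have hlN : (2 * l + 1 : ℝ) < N := by exact_mod_cast hl
  constructor
  · unfold node; positivity
  · rw [node, mul_div_assoc', div_lt_iff₀ hN]
    nlinarith [pi_pos]

theorem sin_node_pos {N l : ℕ} (hl : 2 * l + 1 < N) : 0 < sin (node N l) :=
  sin_pos_of_pos_of_lt_pi (node_mem_Ioo hl).1 (node_mem_Ioo hl).2

theorem weight_nonneg {N l : ℕ} (hl : 2 * l + 1 < N) : 0 ≤ weight N l := by
  have hπ := (node_mem_Ioo hl).2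
  refine div_nonneg (sub_nonneg.2 (cos_le_cos_of_nonneg_of_le_pi (by positivity) hπ.le ?_))
    (sin_node_pos hl).le
  rw [node]
  have : (0 : ℝ) ≤ l := l.cast_nonneg
  nlinarith [show 0 ≤ π / N by positivity]

theorem sum_cos_mul_node {N K m : ℕ} (hK : N = 2 * K ∨ N = 2 * K + 1) (hm : 0 < m)
    (hmN : m < N) :
    ∑ l ∈ range K, cos (m * node N l) = (N - 2 * K) / 2 * (-1) ^ (m + 1) := by
  have hN : (0 : ℝ) < N := by exact_mod_cast (show 0 < N by omega)
  have hsin : 0 < sin (m * (π / N)) := by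
    refine sin_pos_of_pos_of_lt_pi (by positivity) ?_
    rw [mul_div_assoc', div_lt_iff₀ hN]
    have : (m : ℝ) < N := by exact_mod_cast hmN
    nlinarith [pi_pos]
  set x := (m : ℝ) * (π / N) with hx
  have hend : sin (2 * K * x) = (N - 2 * K) * (-1) ^ (m + 1) * sin x := by
    rcases hK with h | h
    · have hNK : (N : ℝ) = 2 * K := by exact_mod_cast h
      rw [show 2 * K * x = m * π by rw [hx, ← hNK]; field_simp, sin_nat_mul_pi, hNK]
      ring
    · have hNK : (N : ℝ) = 2 * K + 1 := by exact_mod_cast h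
      rw [show 2 * K * x = m * π - x by rw [hx, hNK]; field_simp; ring, sin_nat_mul_pi_sub, hNK,
        pow_succ]
      ring
  have hsum : ∑ l ∈ range K, cos (m * node N l) = ∑ l ∈ range K, cos ((2 * l + 1) * x) :=
    sum_congr rfl fun l _ ↦ by rw [node, hx]; ring_nf
  apply mul_left_cancel₀ (mul_ne_zero two_ne_zero hsin.ne')
  rw [hsum, two_mul_sin_mul_sum_cos_odd_mul, hend]
  ring

theorem sum_weight_mul_sin_node_add_two {N K : ℕ} (hKN : 2 * K ≤ N) (j : ℕ) :
    ∑ l ∈ range K, weight N l * sin ((j + 2 : ℕ) * node N l) =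
      ∑ l ∈ range K, weight N l * sin (j * node N l)
        + 2 * cos (π / N) * ∑ l ∈ range K, cos ((j + 1 : ℕ) * node N l)
        - (∑ l ∈ range K, cos ((j + 2 : ℕ) * node N l) + ∑ l ∈ range K, cos (j * node N l)) := by
  rw [mul_sum, ← sum_add_distrib, ← sum_add_distrib, ← sum_sub_distrib]
  refine sum_congr rfl fun l hl ↦ ?_
  have hsin := sin_node_pos (show 2 * l + 1 < N by rw [mem_range] at hl; omega)
  have key := div_sin_mul_sin_add_sub_sin_sub (cos (π / N)) hsin.ne' ((j + 1 : ℕ) * node N l)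
  have h1 : ((j + 1 : ℕ) : ℝ) * node N l + node N l = (j + 2 : ℕ) * node N l := by push_cast; ring
  have h2 : ((j + 1 : ℕ) : ℝ) * node N l - node N l = j * node N l := by push_cast; ring
  rw [h1, h2] at key
  rw [weight]
  linear_combination key

theorem sum_weight_mul_sin_node {N K j : ℕ} (hK : N = 2 * K ∨ N = 2 * K + 1) (hj : 0 < j)
    (hjN : j < N) :
    4 * ∑ l ∈ range K, weight N l * sin (j * node N l) =
      2 * (N - 2 * K) * (1 + cos (π / N)) * j * (-1) ^ j
        - N * ((-1) ^ j * (1 + cos (π / N)) + 1 - cos (π / N)) := by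
  have hKN : 2 * K ≤ N := by omega
  induction j using Nat.strong_induction_on with
  | _ j ih =>
    match j, hj with
    | 1, _ =>
      have h : ∀ l ∈ range K,
          weight N l * sin ((1 : ℕ) * node N l) = cos (π / N) - cos ((1 : ℕ) * node N l) := by
        intro l hl
        have hsin := sin_node_pos (show 2 * l + 1 < N by rw [mem_range] at hl; omega)
        rw [Nat.cast_one, one_mul, weight, div_mul_cancel₀ _ hsin.ne']
      rw [sum_congr rfl h, sum_sub_distrib, sum_cos_mul_node hK one_pos hjN]
      simp only [sum_const, card_range, nsmul_eq_mul]
      rcases hK with rfl | rfl <;> push_cast <;> ring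
    | 2, _ =>
      rw [sum_weight_mul_sin_node_add_two hKN 0]
      simp only [zero_add]
      rw [sum_cos_mul_node hK one_pos (by omega), sum_cos_mul_node hK two_pos hjN]
      simp only [Nat.cast_zero, zero_mul, sin_zero, cos_zero, mul_zero, sum_const_zero, sum_const,
        card_range, nsmul_eq_mul, mul_one]
      rcases hK with rfl | rfl <;> push_cast <;> ring
    | j + 3, _ =>
      have ih' := ih (j + 1) (by omega) (by omega) (by omega)
      rw [sum_weight_mul_sin_node_add_two hKN (j + 1), mul_add, mul_sub, mul_add, ih',
        sum_cos_mul_node hK (by omega) (by omega), sum_cos_mul_node hK (by omega) (by omega),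
        sum_cos_mul_node hK (by omega) (by omega)]
      push_cast
      ring

theorem sum_mul_alternating_nonpos {n N K : ℕ} (hK : N = 2 * K ∨ N = 2 * K + 1) (hnN : n < N)
    (a : ℕ → ℝ) (hpos : ∀ t ∈ Set.Ioo (0 : ℝ) π, 0 ≤ ∑ j ∈ Icc 1 n, a j * sin (j * t)) :
    ∑ j ∈ Icc 1 n, a j * ((-1) ^ j * (1 + cos (π / N)) + 1 - cos (π / N)) ≤ 0 := by
  have hN : (0 : ℝ) < N := by exact_mod_cast (show 0 < N by omega)
  have hterm : ∀ j ∈ Icc 1 n, N * (a j * ((-1) ^ j * (1 + cos (π / N)) + 1 - cos (π / N))) =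
      2 * (N - 2 * K) * (1 + cos (π / N)) * ((-1) ^ j * j * a j)
        - 4 * ∑ l ∈ range K, weight N l * (a j * sin (j * node N l)) := by
    intro j hj
    rw [mem_Icc] at hj
    have h := sum_weight_mul_sin_node hK hj.1 (by omega)
    have hpull : ∑ l ∈ range K, weight N l * (a j * sin (j * node N l)) =
        a j * ∑ l ∈ range K, weight N l * sin (j * node N l) := by
      rw [mul_sum]
      exact sum_congr rfl fun _ _ ↦ by ring
    rw [hpull]
    linear_combination a j * h
  have hsum : N * ∑ j ∈ Icc 1 n, a j * ((-1) ^ j * (1 + cos (π / N)) + 1 - cos (π / N)) =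
      2 * (N - 2 * K) * (1 + cos (π / N)) * ∑ j ∈ Icc 1 n, (-1) ^ j * j * a j
        - 4 * ∑ l ∈ range K, weight N l * ∑ j ∈ Icc 1 n, a j * sin (j * node N l) := by
    rw [mul_sum, sum_congr rfl hterm, sum_sub_distrib, ← mul_sum, ← mul_sum, sum_comm]
    simp only [mul_sum]
  have hnodes : 0 ≤ ∑ l ∈ range K, weight N l * ∑ j ∈ Icc 1 n, a j * sin (j * node N l) :=
    sum_nonneg fun l hl ↦ by
      have hl' : 2 * l + 1 < N := by rw [mem_range] at hl; omega
      exact mul_nonneg (weight_nonneg hl') (hpos _ (node_mem_Ioo hl'))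
  have hparity : (0 : ℝ) ≤ N - 2 * K := by
    rcases hK with rfl | rfl <;> push_cast <;> linarith
  have hcoef : 0 ≤ 2 * (N - 2 * K) * (1 + cos (π / N)) :=
    mul_nonneg (mul_nonneg zero_le_two hparity) (by linarith [neg_one_le_cos (π / N)])
  have hderiv :=
    mul_nonpos_of_nonneg_of_nonpos hcoef (sum_neg_one_pow_mul_nat_mul_nonpos (Icc 1 n) a hpos)
  refine nonpos_of_mul_nonpos_right ?_ hN
  rw [hsum]
  linarith

/-- If the sine polynomial is nonnegative on `(0, π)` and the coefficients sum
to 1, then the cosine polynomial at `π` is at most `−tan²(π/(2(n+1)))`. -/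
theorem stmt_4 (n : ℕ) (hn : 0 < n) (a : ℕ → ℝ)
    (hsum : (∑ j ∈ Finset.Icc 1 n, a j) = 1)
    (hpos : ∀ t ∈ Set.Ioo (0 : ℝ) π, 0 ≤ ∑ j ∈ Finset.Icc 1 n, a j * Real.sin (j * t)) :
    (∑ j ∈ Finset.Icc 1 n, (-1 : ℝ) ^ j * a j) ≤ -(Real.tan (π / (2 * (n + 1)))) ^ 2 := by
  have h := sum_mul_alternating_nonpos (N := n + 1) (K := (n + 1) / 2) (by omega) (by omega) a hpos
  push_cast at h
  set α := π / (n + 1)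
  have hcos : 0 < 1 + cos α := by
    have hα : α ≤ π / 2 := div_le_div_of_nonneg_left pi_pos.le two_pos (by norm_cast; omega)
    linarith [cos_nonneg_of_mem_Icc ⟨by linarith [show 0 < α by positivity], hα⟩]
  have hsplit : ∑ j ∈ Icc 1 n, a j * ((-1) ^ j * (1 + cos α) + 1 - cos α) =
      (∑ j ∈ Icc 1 n, (-1) ^ j * a j) * (1 + cos α) + (∑ j ∈ Icc 1 n, a j) * (1 - cos α) := by
    rw [sum_mul, sum_mul, ← sum_add_distrib]
    exact sum_congr rfl fun j _ ↦ by ring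
  rw [hsplit, hsum, one_mul] at h
  rw [mul_comm, ← div_div, tan_sq_half, le_neg, div_le_iff₀ hcos]
  linarith
end

section
/- Let n be a positive integer and for 1 ≤ j ≤ n set a_j^0 = 2 · tan(π/(2(n+1))) · (1 − j/(n+1)) · sin(πj/(n+1)). Then: (i) Σ_{j=1}^n a_j^0 = 1; (ii) Σ_{j=1}^n a_j^0 sin(jt) ≥ 0 for all t ∈ [0,π]; and (iii) Σ_{j=1}^n (−1)^j a_j^0 = −tan²(π/(2(n+1))). -/
/-!
Put `θ = π / (2 (n + 1))`. Then `aⱼ⁰ = (2 tan θ / (n + 1)) (n + 1 - j) sin (2jθ)`, so everything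
reduces to the weighted sums `C(x) = ∑ (n + 1 - j) cos (jx)` and `S(x) = ∑ (n + 1 - j) sin (jx)`.
Their closed forms come from `(∑ (n + 1 - j) zʲ) (z - 1)² = z (z ^ (n + 1) - (n + 1) z + n)` at
`z = exp (ix)`, where `(z - 1)² = -4 sin² (x / 2) z`; parts (i) and (iii) are `S` at `2θ` and
`2θ + π`. For (ii), `2 sin (2jθ) sin (jt) = cos (j (t - 2θ)) - cos (j (t + 2θ))` makes the sum a
positive multiple of `C(t - 2θ) - C(t + 2θ)`. By Fejér's identity, `n + 1 + 2 C(t ∓ 2θ)` equals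
`cos² ((n + 1) t / 2) / sin² (t / 2 ∓ θ)`, and `sin² (t / 2 - θ) ≤ sin² (t / 2 + θ)` on `[0, π]`.
-/

open Real Finset

theorem sum_Icc_weighted_pow_mul_sub_one_sq {R : Type*} [CommRing R] (n : ℕ) (z : R) :
    (∑ j ∈ Icc 1 n, ((n : R) + 1 - j) * z ^ j) * (z - 1) ^ 2
      = z * (z ^ (n + 1) - (n + 1) * z + n) := by
  induction n with
  | zero => simp
  | succ k ih =>
    have hsplit : ∀ j ∈ Icc 1 (k + 1), (((k + 1 : ℕ) : R) + 1 - j) * z ^ j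
        = ((k : R) + 1 - j) * z ^ j + z ^ j := fun j _ => by push_cast; ring
    rw [sum_congr rfl hsplit, sum_add_distrib, sum_Icc_succ_top (by omega : 1 ≤ k + 1)]
    have hgeom := geom_sum_Ico_mul z (by omega : 1 ≤ k + 1 + 1)
    rw [Finset.Ico_add_one_right_eq_Icc] at hgeom
    push_cast
    linear_combination ih + (z - 1) * hgeom

namespace Complex

theorem exp_mul_I_sub_one (x : ℂ) :
    exp (x * I) - 1 = 2 * I * sin (x / 2) * exp (x / 2 * I) := by
  rw [sin, show x * I = x / 2 * I + x / 2 * I by ring, exp_add]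
  have h : exp (-(x / 2) * I) * exp (x / 2 * I) = 1 := by
    rw [← exp_add]; ring_nf; exact exp_zero
  linear_combination -I ^ 2 * h + (exp (x / 2 * I) ^ 2 - 1) * I_sq

theorem four_mul_sin_sq_mul_sum_exp (n : ℕ) (x : ℂ) :
    4 * sin (x / 2) ^ 2 * ∑ j ∈ Icc 1 n, ((n : ℂ) + 1 - j) * exp (j * x * I)
      = (n + 1) * exp (x * I) - n - exp ((n + 1) * x * I) := by
  set z := exp (x * I)
  have hpow : ∀ m : ℕ, exp (m * x * I) = z ^ m := fun m => by
    rw [← exp_nat_mul]; ring_nf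
  have hsq : (z - 1) ^ 2 = -(4 * sin (x / 2) ^ 2) * z := by
    have hhalf : exp (x / 2 * I) ^ 2 = z := by
      rw [← exp_nat_mul]; ring_nf; rfl
    rw [exp_mul_I_sub_one]
    linear_combination 4 * sin (x / 2) ^ 2 * (exp (x / 2 * I) ^ 2 * I_sq - hhalf)
  have key := sum_Icc_weighted_pow_mul_sub_one_sq n z
  rw [hsq] at key
  simp only [hpow, show ((n : ℂ) + 1) * x = (n + 1 : ℕ) * x by push_cast; ring]
  apply mul_left_cancel₀ (exp_ne_zero (x * I))
  linear_combination -key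

end Complex

noncomputable def weightedCosSum (n : ℕ) (x : ℝ) : ℝ :=
  ∑ j ∈ Icc 1 n, ((n : ℝ) + 1 - j) * cos (j * x)

noncomputable def weightedSinSum (n : ℕ) (x : ℝ) : ℝ :=
  ∑ j ∈ Icc 1 n, ((n : ℝ) + 1 - j) * sin (j * x)

theorem four_mul_sin_sq_mul_weightedSum (n : ℕ) (x : ℝ) :
    4 * sin (x / 2) ^ 2 * weightedCosSum n x = (n + 1) * cos x - n - cos ((n + 1) * x) ∧
    4 * sin (x / 2) ^ 2 * weightedSinSum n x = (n + 1) * sin x - sin ((n + 1) * x) := by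
  have hsum : ∑ j ∈ Icc 1 n, ((n : ℂ) + 1 - j) * Complex.exp (j * x * Complex.I)
      = weightedCosSum n x + weightedSinSum n x * Complex.I := by
    simp only [weightedCosSum, weightedSinSum, Complex.ofReal_sum, sum_mul, ← sum_add_distrib]
    refine sum_congr rfl fun j _ => ?_
    rw [show (j : ℂ) * x = ((j * x : ℝ) : ℂ) by push_cast; ring, Complex.exp_mul_I]
    push_cast
    ring
  have key := Complex.four_mul_sin_sq_mul_sum_exp n x
  rw [hsum, Complex.exp_mul_I, Complex.exp_mul_I] at key
  have hreal : ((4 * sin (x / 2) ^ 2 * weightedCosSum n x : ℝ) : ℂ)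
        + ((4 * sin (x / 2) ^ 2 * weightedSinSum n x : ℝ) : ℂ) * Complex.I
      = (((n + 1) * cos x - n - cos ((n + 1) * x) : ℝ) : ℂ)
        + (((n + 1) * sin x - sin ((n + 1) * x) : ℝ) : ℂ) * Complex.I := by
    push_cast
    linear_combination key
  rw [Complex.ext_iff] at hreal
  simpa only [Complex.add_re, Complex.add_im, Complex.mul_re, Complex.mul_im, Complex.ofReal_re,
    Complex.ofReal_im, Complex.I_re, Complex.I_im, mul_zero, mul_one, sub_zero, add_zero,
    zero_add] using hreal

theorem cos_eq_one_sub_two_mul_sin_sq_half (x : ℝ) : cos x = 1 - 2 * sin (x / 2) ^ 2 := by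
  have h := cos_two_mul' (x / 2)
  rw [mul_div_cancel₀ x two_ne_zero] at h
  linear_combination h + sin_sq_add_cos_sq (x / 2)

/-- `n + 1 + 2 * weightedCosSum n x` is `n + 1` times the Fejér kernel. -/
theorem sin_sq_half_mul_fejer (n : ℕ) (x : ℝ) :
    sin (x / 2) ^ 2 * (n + 1 + 2 * weightedCosSum n x) = sin ((n + 1) * x / 2) ^ 2 := by
  have key := (four_mul_sin_sq_mul_weightedSum n x).1
  linear_combination key / 2 + (n + 1) / 2 * cos_eq_one_sub_two_mul_sin_sq_half x
    - cos_eq_one_sub_two_mul_sin_sq_half ((n + 1) * x) / 2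

theorem sin_sub_sq_le_sin_add_sq {u v : ℝ} (hu : 0 ≤ sin (2 * u)) (hv : 0 ≤ sin (2 * v)) :
    sin (u - v) ^ 2 ≤ sin (u + v) ^ 2 := by
  have h : sin (u + v) ^ 2 - sin (u - v) ^ 2 = sin (2 * u) * sin (2 * v) := by
    rw [sin_add, sin_sub, sin_two_mul, sin_two_mul]
    ring
  linarith [mul_nonneg hu hv]

theorem fejer_eq_div (n : ℕ) {x : ℝ} (hx : sin (x / 2) ≠ 0) :
    n + 1 + 2 * weightedCosSum n x = sin ((n + 1) * x / 2) ^ 2 / sin (x / 2) ^ 2 := by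
  rw [eq_div_iff (pow_ne_zero 2 hx), mul_comm]
  exact sin_sq_half_mul_fejer n x

noncomputable def extremalCoeff (n j : ℕ) : ℝ :=
  2 * tan (π / (2 * (n + 1))) * (1 - j / (n + 1)) * sin (π * j / (n + 1))

section extremalCoeff

variable {n : ℕ} {θ : ℝ}

theorem pos_of_succ_mul_two_mul_eq_pi (hθ : (n + 1) * (2 * θ) = π) : 0 < θ := by
  nlinarith [pi_pos]

theorem lt_pi_div_two_of_succ_mul_two_mul_eq_pi (hn : 0 < n) (hθ : (n + 1) * (2 * θ) = π) :
    θ < π / 2 := by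
  have : (1 : ℝ) ≤ n := by exact_mod_cast hn
  nlinarith [pos_of_succ_mul_two_mul_eq_pi hθ]

theorem extremalCoeff_eq (hθ : (n + 1) * (2 * θ) = π) (j : ℕ) :
    extremalCoeff n j = 2 * tan θ / (n + 1) * ((n + 1 - j) * sin (j * (2 * θ))) := by
  have hn1 : (n : ℝ) + 1 ≠ 0 := by positivity
  obtain rfl : θ = π / (2 * (n + 1)) := by field_simp; linarith
  rw [extremalCoeff]
  field_simp

theorem sum_extremalCoeff (hn : 0 < n) (hθ : (n + 1) * (2 * θ) = π) :
    ∑ j ∈ Icc 1 n, extremalCoeff n j = 1 := by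
  have hθ0 := pos_of_succ_mul_two_mul_eq_pi hθ
  have hθ1 := lt_pi_div_two_of_succ_mul_two_mul_eq_pi hn hθ
  have hsin : 0 < sin θ := sin_pos_of_pos_of_lt_pi hθ0 (by linarith)
  have hcos : 0 < cos θ := cos_pos_of_mem_Ioo ⟨by linarith, hθ1⟩
  have hsum : 4 * sin θ ^ 2 * weightedSinSum n (2 * θ) = (n + 1) * sin (2 * θ) := by
    have := (four_mul_sin_sq_mul_weightedSum n (2 * θ)).2
    rwa [mul_div_cancel_left₀ θ two_ne_zero, hθ, sin_pi, sub_zero] at this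
  simp only [extremalCoeff_eq hθ, ← mul_sum]
  rw [← weightedSinSum, tan_eq_sin_div_cos]
  rw [sin_two_mul] at hsum
  field_simp
  apply mul_left_cancel₀ (mul_pos two_pos hsin).ne'
  linear_combination hsum

theorem sum_neg_one_pow_mul_extremalCoeff (hn : 0 < n) (hθ : (n + 1) * (2 * θ) = π) :
    ∑ j ∈ Icc 1 n, (-1) ^ j * extremalCoeff n j = -tan θ ^ 2 := by
  have hθ0 := pos_of_succ_mul_two_mul_eq_pi hθ
  have hθ1 := lt_pi_div_two_of_succ_mul_two_mul_eq_pi hn hθ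
  have hcos : 0 < cos θ := cos_pos_of_mem_Ioo ⟨by linarith, hθ1⟩
  have hsum : 4 * cos θ ^ 2 * weightedSinSum n (2 * θ + π) = (n + 1) * -sin (2 * θ) := by
    have := (four_mul_sin_sq_mul_weightedSum n (2 * θ + π)).2
    rwa [show (2 * θ + π) / 2 = θ + π / 2 by ring, sin_add_pi_div_two, sin_add_pi,
      show (n + 1) * (2 * θ + π) = (n + 2 : ℕ) * π by push_cast; linear_combination hθ,
      sin_nat_mul_pi, sub_zero] at this
  have hterm : ∀ j ∈ Icc 1 n, (-1) ^ j * extremalCoeff n j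
      = 2 * tan θ / (n + 1) * ((n + 1 - j) * sin (j * (2 * θ + π))) := fun j _ => by
    rw [extremalCoeff_eq hθ, mul_add, sin_add_nat_mul_pi]
    ring
  rw [sum_congr rfl hterm, ← mul_sum, ← weightedSinSum, tan_eq_sin_div_cos]
  rw [sin_two_mul] at hsum
  field_simp
  apply mul_left_cancel₀ (mul_pos two_pos hcos).ne'
  linear_combination sin θ * hsum

theorem weightedCosSum_add_le_sub (hn : 0 < n) (hθ : (n + 1) * (2 * θ) = π) {t : ℝ}
    (ht : t ∈ Set.Icc 0 π) (hne : t ≠ 2 * θ) :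
    weightedCosSum n (t + 2 * θ) ≤ weightedCosSum n (t - 2 * θ) := by
  obtain ⟨ht0, htπ⟩ := ht
  have hθ0 := pos_of_succ_mul_two_mul_eq_pi hθ
  have hθ1 := lt_pi_div_two_of_succ_mul_two_mul_eq_pi hn hθ
  have hplus : sin ((n + 1) * (t + 2 * θ) / 2) ^ 2 = cos ((n + 1) * t / 2) ^ 2 := by
    rw [show (n + 1) * (t + 2 * θ) / 2 = (n + 1) * t / 2 + π / 2 by linear_combination hθ / 2,
      sin_add_pi_div_two]
  have hminus : sin ((n + 1) * (t - 2 * θ) / 2) ^ 2 = cos ((n + 1) * t / 2) ^ 2 := by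
    rw [show (n + 1) * (t - 2 * θ) / 2 = (n + 1) * t / 2 - π / 2 by linear_combination -hθ / 2,
      sin_sub_pi_div_two, neg_sq]
  have hsin_add : 0 < sin (t / 2 + θ) := sin_pos_of_pos_of_lt_pi (by linarith) (by linarith)
  have hsin_sub : sin (t / 2 - θ) ≠ 0 := by
    rw [Ne, sin_eq_zero_iff_of_lt_of_lt (by linarith) (by linarith)]
    contrapose! hne
    linarith
  have hle : sin (t / 2 - θ) ^ 2 ≤ sin (t / 2 + θ) ^ 2 := by
    apply sin_sub_sq_le_sin_add_sq
    · rw [mul_div_cancel₀ t two_ne_zero]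
      exact sin_nonneg_of_nonneg_of_le_pi ht0 htπ
    · exact sin_nonneg_of_nonneg_of_le_pi (by linarith) (by linarith)
  have half_add : (t + 2 * θ) / 2 = t / 2 + θ := by ring
  have half_sub : (t - 2 * θ) / 2 = t / 2 - θ := by ring
  have hadd := fejer_eq_div n (x := t + 2 * θ) (half_add ▸ hsin_add.ne')
  have hsub := fejer_eq_div n (x := t - 2 * θ) (half_sub ▸ hsin_sub)
  rw [hplus, half_add] at hadd
  rw [hminus, half_sub] at hsub
  have := div_le_div_of_nonneg_left (sq_nonneg (cos ((n + 1) * t / 2))) (by positivity) hle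
  linarith

theorem sum_extremalCoeff_mul_sin_eq (hθ : (n + 1) * (2 * θ) = π) (t : ℝ) :
    ∑ j ∈ Icc 1 n, extremalCoeff n j * sin (j * t)
      = tan θ / (n + 1) * (weightedCosSum n (t - 2 * θ) - weightedCosSum n (t + 2 * θ)) := by
  rw [weightedCosSum, weightedCosSum, ← sum_sub_distrib, mul_sum]
  refine sum_congr rfl fun j _ => ?_
  rw [extremalCoeff_eq hθ, mul_sub (j : ℝ) t, mul_add (j : ℝ) t]
  linear_combination (tan θ / (n + 1) * (n + 1 - j)) * two_mul_sin_mul_sin (j * t) (j * (2 * θ))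

theorem sum_extremalCoeff_mul_sin_nonneg (hn : 0 < n) (hθ : (n + 1) * (2 * θ) = π) {t : ℝ}
    (ht : t ∈ Set.Icc 0 π) : 0 ≤ ∑ j ∈ Icc 1 n, extremalCoeff n j * sin (j * t) := by
  have hθ0 := pos_of_succ_mul_two_mul_eq_pi hθ
  have htan : 0 < tan θ := tan_pos_of_pos_of_lt_pi_div_two hθ0
    (lt_pi_div_two_of_succ_mul_two_mul_eq_pi hn hθ)
  rcases eq_or_ne t (2 * θ) with rfl | hne
  · refine sum_nonneg fun j hj => ?_
    have hj : (j : ℝ) ≤ n := by exact_mod_cast (mem_Icc.1 hj).2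
    rw [extremalCoeff_eq hθ, mul_assoc, mul_assoc, ← sq]
    exact mul_nonneg (by positivity) (mul_nonneg (by linarith) (sq_nonneg _))
  · rw [sum_extremalCoeff_mul_sin_eq hθ]
    exact mul_nonneg (by positivity) (sub_nonneg.2 (weightedCosSum_add_le_sub hn hθ ht hne))

end extremalCoeff

/-- Properties of the extremal coefficients
`aⱼ⁰ = 2 tan(π/(2(n+1))) (1 − j/(n+1)) sin(πj/(n+1))`. -/
theorem stmt_5 (n : ℕ) (hn : 0 < n)
    (a : ℕ → ℝ)
    (ha : ∀ j ∈ Finset.Icc 1 n, a j =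
      2 * Real.tan (π / (2 * (n + 1))) * (1 - j / (n + 1)) * Real.sin (π * j / (n + 1))) :
    (∑ j ∈ Finset.Icc 1 n, a j) = 1 ∧
    (∀ t ∈ Set.Icc (0 : ℝ) π, 0 ≤ ∑ j ∈ Finset.Icc 1 n, a j * Real.sin (j * t)) ∧
    (∑ j ∈ Finset.Icc 1 n, (-1 : ℝ) ^ j * a j) = -(Real.tan (π / (2 * (n + 1)))) ^ 2 := by
  have hθ : ((n : ℝ) + 1) * (2 * (π / (2 * (n + 1)))) = π := by field_simp
  have ha' : ∀ j ∈ Icc 1 n, a j = extremalCoeff n j := ha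
  refine ⟨?_, fun t ht => ?_, ?_⟩
  · rw [sum_congr rfl ha']
    exact sum_extremalCoeff hn hθ
  · rw [sum_congr rfl fun j hj => by rw [ha' j hj]]
    exact sum_extremalCoeff_mul_sin_nonneg hn hθ ht
  · rw [sum_congr rfl fun j hj => by rw [ha' j hj]]
    exact sum_neg_one_pow_mul_extremalCoeff hn hθ
end

section
/- Let n be a positive integer and for 1 ≤ j ≤ n set a_j^0 = 2 · tan(π/(2(n+1))) · (1 − j/(n+1)) · sin(πj/(n+1)). Then for every real t with cos t ≠ cos(π/(n+1)) one has Σ_{j=1}^n a_j^0 sin(jt) = sin t · (2(1 − cos(π/(n+1)))/(n+1)) · cos²((n+1)t/2) / (cos t − cos(π/(n+1)))². -/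
/-!
With `θ = π / (n + 1)`, the product formula `2 sin (j θ) sin (j t) = cos (j (t - θ)) - cos (j (t + θ))`
turns the sum into a difference of two Fejér sums `∑ (n + 1 - j) cos (j x)` at `x = t ∓ θ`. Each has
the closed form `2 sin² (x / 2) ∑ = sin² ((n + 1) x / 2) - (n + 1) sin² (x / 2)`, and since
`(n + 1) θ = π` both numerators `sin² ((n + 1) (t ∓ θ) / 2)` equal `cos² ((n + 1) t / 2)`.
Clearing the denominators, whose product is `(cos t - cos θ)² / 4`, leaves
`sin² ((t + θ) / 2) - sin² ((t - θ) / 2) = sin t sin θ`, and finally `tan (θ / 2) sin θ = 1 - cos θ`.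
-/

open Real Finset

lemma sin_sq_sub_sin_sq (a b : ℝ) : sin a ^ 2 - sin b ^ 2 = sin (a + b) * sin (a - b) := by
  rw [sin_add, sin_sub]
  linear_combination sin b ^ 2 * sin_sq_add_cos_sq a - sin a ^ 2 * sin_sq_add_cos_sq b

lemma tan_mul_sin_two_mul {y : ℝ} (hy : cos y ≠ 0) : tan y * sin (2 * y) = 1 - cos (2 * y) := by
  rw [tan_eq_sin_div_cos, sin_two_mul, cos_two_mul]
  field_simp
  linear_combination 2 * sin_sq_add_cos_sq y

lemma two_mul_sin_half_mul_sum_Icc_cos (N : ℕ) (x : ℝ) :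
    2 * sin (x / 2) * ∑ j ∈ Icc 1 N, cos (j * x) = sin ((2 * N + 1) * x / 2) - sin (x / 2) := by
  induction N with
  | zero => simp
  | succ N ih =>
    have hstep : sin ((2 * (N + 1) + 1) * x / 2) - sin ((2 * N + 1) * x / 2) =
        2 * sin (x / 2) * cos ((N + 1) * x) := by
      rw [sin_sub_sin]; ring_nf
    rw [sum_Icc_succ_top (by omega), mul_add, ih]
    push_cast
    linear_combination -hstep

lemma two_mul_sin_sq_half_mul_sum_Icc_fejer_cos (N : ℕ) (x : ℝ) :
    2 * sin (x / 2) ^ 2 * ∑ j ∈ Icc 1 N, ((N + 1 : ℝ) - j) * cos (j * x) =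
      sin ((N + 1) * x / 2) ^ 2 - (N + 1) * sin (x / 2) ^ 2 := by
  induction N with
  | zero => simp
  | succ N ih =>
    have hweight : ∀ j ∈ Icc 1 (N + 1), (((N + 1 : ℕ) : ℝ) + 1 - j) * cos (j * x) =
        ((N + 1 : ℝ) - j) * cos (j * x) + cos (j * x) := fun j _ => by push_cast; ring
    have hstep : sin ((N + 1 + 1) * x / 2) ^ 2 - sin ((N + 1) * x / 2) ^ 2 =
        sin ((2 * (N + 1) + 1) * x / 2) * sin (x / 2) := by
      rw [sin_sq_sub_sin_sq]; ring_nf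
    have hdir := two_mul_sin_half_mul_sum_Icc_cos (N + 1) x
    rw [sum_congr rfl hweight, sum_add_distrib, sum_Icc_succ_top (by omega : 1 ≤ N + 1)]
    push_cast at hdir ⊢
    linear_combination ih + sin (x / 2) * hdir - hstep

lemma cos_sub_cos_sq_mul_sum_Icc_fejer_sin_mul_sin (N : ℕ) (t θ : ℝ) :
    (cos t - cos θ) ^ 2 * ∑ j ∈ Icc 1 N, ((N + 1 : ℝ) - j) * (2 * sin (j * t) * sin (j * θ)) =
      2 * (sin ((t + θ) / 2) ^ 2 * sin ((N + 1) * (t - θ) / 2) ^ 2 -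
        sin ((t - θ) / 2) ^ 2 * sin ((N + 1) * (t + θ) / 2) ^ 2) := by
  have hterm : ∀ j ∈ Icc 1 N, ((N + 1 : ℝ) - j) * (2 * sin (j * t) * sin (j * θ)) =
      ((N + 1 : ℝ) - j) * cos (j * (t - θ)) - ((N + 1 : ℝ) - j) * cos (j * (t + θ)) :=
    fun j _ => by rw [two_mul_sin_mul_sin, ← mul_sub (j : ℝ) t θ, ← mul_add (j : ℝ) t θ]; ring
  have hminus := two_mul_sin_sq_half_mul_sum_Icc_fejer_cos N (t - θ)
  have hplus := two_mul_sin_sq_half_mul_sum_Icc_fejer_cos N (t + θ)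
  rw [sum_congr rfl hterm, sum_sub_distrib, cos_sub_cos]
  linear_combination 2 * sin ((t + θ) / 2) ^ 2 * hminus - 2 * sin ((t - θ) / 2) ^ 2 * hplus

lemma cos_sub_cos_sq_mul_sum_Icc_fejer_sin_mul_sin_pi_div (N : ℕ) (t : ℝ) :
    (cos t - cos (π / (N + 1))) ^ 2 *
        ∑ j ∈ Icc 1 N, ((N + 1 : ℝ) - j) * (2 * sin (j * t) * sin (j * (π / (N + 1)))) =
      2 * sin t * sin (π / (N + 1)) * cos ((N + 1) * t / 2) ^ 2 := by
  set θ := π / (N + 1) with hθ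
  have hNθ : (N + 1 : ℝ) * θ = π := by rw [hθ]; field_simp
  have hminus : sin ((N + 1) * (t - θ) / 2) ^ 2 = cos ((N + 1) * t / 2) ^ 2 := by
    rw [show (N + 1 : ℝ) * (t - θ) / 2 = (N + 1) * t / 2 - π / 2 by linear_combination -hNθ / 2,
      sin_sub_pi_div_two, neg_sq]
  have hplus : sin ((N + 1) * (t + θ) / 2) ^ 2 = cos ((N + 1) * t / 2) ^ 2 := by
    rw [show (N + 1 : ℝ) * (t + θ) / 2 = (N + 1) * t / 2 + π / 2 by linear_combination hNθ / 2,
      sin_add_pi_div_two]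
  have hdiff := sin_sq_sub_sin_sq ((t + θ) / 2) ((t - θ) / 2)
  rw [show (t + θ) / 2 + (t - θ) / 2 = t by ring, show (t + θ) / 2 - (t - θ) / 2 = θ by ring] at hdiff
  rw [cos_sub_cos_sq_mul_sum_Icc_fejer_sin_mul_sin, hminus, hplus]
  linear_combination 2 * cos ((N + 1) * t / 2) ^ 2 * hdiff

/-- The extremal sine polynomial is `sin t` times a multiple of the Fejér
kernel `Φ_{n-1}^{(1)}`. -/
theorem stmt_6 (n : ℕ) (hn : 0 < n)
    (a : ℕ → ℝ)
    (ha : ∀ j ∈ Finset.Icc 1 n, a j =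
      2 * Real.tan (π / (2 * (n + 1))) * (1 - j / (n + 1)) * Real.sin (π * j / (n + 1)))
    (t : ℝ) (htc : Real.cos t ≠ Real.cos (π / (n + 1))) :
    (∑ j ∈ Finset.Icc 1 n, a j * Real.sin (j * t)) =
      Real.sin t * (2 * (1 - Real.cos (π / (n + 1))) / (n + 1)) *
        (Real.cos ((n + 1) * t / 2)) ^ 2 / (Real.cos t - Real.cos (π / (n + 1))) ^ 2 := by
  have hθ : 2 * (π / (2 * (n + 1))) = π / (n + 1) := by field_simp
  have hcos : cos (π / (2 * (n + 1))) ≠ 0 := by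
    have hn' : (1 : ℝ) ≤ n := by exact_mod_cast hn
    refine (cos_pos_of_mem_Ioo ⟨by linarith [pi_pos, show 0 < π / (2 * (n + 1)) by positivity], ?_⟩).ne'
    rw [div_lt_div_iff₀ (by positivity) two_pos]
    nlinarith [pi_pos]
  have hsum : ∑ j ∈ Icc 1 n, a j * sin (j * t) = tan (π / (2 * (n + 1))) / (n + 1) *
      ∑ j ∈ Icc 1 n, ((n + 1 : ℝ) - j) * (2 * sin (j * t) * sin (j * (π / (n + 1)))) := by
    rw [mul_sum]
    refine sum_congr rfl fun j hj => ?_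
    rw [ha j hj]
    field_simp
  have htan := tan_mul_sin_two_mul hcos
  rw [hθ] at htan
  rw [hsum, eq_div_iff (pow_ne_zero 2 (sub_ne_zero.mpr htc))]
  linear_combination tan (π / (2 * (n + 1))) / (n + 1) *
      cos_sub_cos_sq_mul_sum_Icc_fejer_sin_mul_sin_pi_div n t +
    2 * sin t * cos ((n + 1) * t / 2) ^ 2 / (n + 1) * htan
end

section
/- Let n be a positive integer and let a_1,…,a_n be real numbers with Σ_{j=1}^n a_j = 1. If Σ_{j=1}^n a_j cos((2j−1)t) ≥ 0 for all t ∈ (0,π/2), then Σ_{j=1}^n (−1)^{j+1} a_j ≥ 1/n; that is, the value of S(t) = Σ_{j=1}^n a_j sin((2j−1)t) at t = π/2 is at least 1/n. -/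
open Real Finset

/-!
The multiples `t = iπ/n` lying in `(0, π/2)` (those with `1 ≤ i ≤ q`, where `n = 2q + 1 + e`,
`e ∈ {0, 1}`) give a positive quadrature rule with weights `2 / cos t`: summing the Dirichlet
kernel over them shows that the rule sends `cos ((2j - 1) t)` to
`(-1)^(j+1) (n - (-1)^(j+1) - e (2j - 1))` for `1 ≤ j ≤ n`. Applied to `C ≥ 0` this yields
`0 ≤ n S(π/2) - 1 - e D` with `D = Σ aⱼ (2j - 1) (-1)^(j+1) = -C'(π/2)`, and `D ≥ 0` because `C`
vanishes at `π/2` and is nonnegative to its left.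
-/

open Filter Topology

theorem sin_mul_one_add_two_mul_sum_cos (q : ℕ) (x : ℝ) :
    sin x * (1 + 2 * ∑ i ∈ Icc 1 q, cos (2 * i * x)) = sin ((2 * q + 1) * x) := by
  induction q with
  | zero => simp
  | succ q ih =>
    have h : 2 * sin x * cos (2 * (q + 1) * x) =
        sin ((2 * (q + 1) + 1) * x) - sin ((2 * q + 1) * x) := by
      rw [two_mul_sin_mul_cos, show x - 2 * (q + 1) * x = -((2 * q + 1) * x) by ring, sin_neg]
      ring_nf
    rw [sum_Icc_succ_top (by omega)]
    push_cast
    linear_combination ih + h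

theorem nat_mul_pi_div_mem_Ioo {n q i : ℕ} (hq : 2 * q < n) (hi : i ∈ Icc 1 q) :
    i * π / n ∈ Set.Ioo 0 (π / 2) := by
  obtain ⟨hi₁, hiq⟩ := mem_Icc.1 hi
  have hn : (0 : ℝ) < n := by exact_mod_cast (show 0 < n by omega)
  have hin : (2 * i : ℝ) < n := by exact_mod_cast (show 2 * i < n by omega)
  have hi₀ : (0 : ℝ) < i := by exact_mod_cast hi₁
  refine ⟨by positivity, ?_⟩
  rw [div_lt_div_iff₀ hn two_pos]
  nlinarith [pi_pos]

theorem cos_nat_mul_pi_div_pos {n q i : ℕ} (hq : 2 * q < n) (hi : i ∈ Icc 1 q) :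
    0 < cos (i * π / n) := by
  obtain ⟨h₀, h₁⟩ := nat_mul_pi_div_mem_Ioo hq hi
  exact cos_pos_of_mem_Ioo ⟨by linarith [pi_pos], h₁⟩

theorem one_add_two_mul_sum_cos_nat_mul_pi_div {n q e l : ℕ} (hn : n = 2 * q + 1 + e)
    (he : e ≤ 1) (hl₀ : 0 < l) (hl : l < n) :
    1 + 2 * ∑ i ∈ Icc 1 q, cos (2 * l * (i * π / n)) = e * (-1) ^ (l + 1) := by
  set x := l * π / n
  have hn₀ : (n : ℝ) ≠ 0 := by exact_mod_cast (show n ≠ 0 by omega)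
  have hsin : sin x ≠ 0 := by
    have hx : x ∈ Set.Ioo 0 π := by
      constructor
      · positivity
      · rw [div_lt_iff₀ (by positivity)]
        have : (l : ℝ) < n := by exact_mod_cast hl
        nlinarith [pi_pos]
    exact (sin_pos_of_pos_of_lt_pi hx.1 hx.2).ne'
  refine mul_left_cancel₀ hsin ?_
  have hsum : ∑ i ∈ Icc 1 q, cos (2 * l * (i * π / n)) = ∑ i ∈ Icc 1 q, cos (2 * i * x) :=
    sum_congr rfl fun i _ ↦ by congr 1; ring
  have harg : (2 * q + 1) * x = l * π - e * x := by
    have : (n : ℝ) = 2 * q + 1 + e := by exact_mod_cast hn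
    simp only [x]; field_simp; rw [this]; ring
  rw [hsum, sin_mul_one_add_two_mul_sum_cos, harg, sin_nat_mul_pi_sub]
  interval_cases e
  · simp
  · simp [pow_succ, mul_comm]

theorem two_div_cos_mul_cos_odd_succ (j : ℕ) {t : ℝ} (ht : cos t ≠ 0) :
    2 / cos t * cos ((2 * (j + 1 : ℕ) - 1) * t) =
      4 * cos (2 * j * t) - 2 / cos t * cos ((2 * j - 1) * t) := by
  have h : cos ((2 * (j + 1 : ℕ) - 1) * t) + cos ((2 * j - 1) * t) =
      2 * cos (2 * j * t) * cos t := by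
    rw [two_mul_cos_mul_cos]; push_cast; ring_nf
  rw [eq_sub_of_add_eq h]
  field_simp
  ring

theorem sum_two_div_cos_mul_cos_odd_mul_nat_mul_pi_div {n q e j : ℕ} (hn : n = 2 * q + 1 + e)
    (he : e ≤ 1) (hj₁ : 1 ≤ j) (hj : j ≤ n) :
    ∑ i ∈ Icc 1 q, 2 / cos (i * π / n) * cos ((2 * j - 1) * (i * π / n)) =
      (-1) ^ (j + 1) * (n - (-1) ^ (j + 1) - e * (2 * j - 1)) := by
  have hcos : ∀ i ∈ Icc 1 q, cos (i * π / n) ≠ 0 := fun i hi ↦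
    (cos_nat_mul_pi_div_pos (by omega) hi).ne'
  have hn' : (n : ℝ) = 2 * q + 1 + e := by exact_mod_cast hn
  induction j, hj₁ using Nat.le_induction with
  | base =>
    rw [sum_congr rfl fun i hi ↦ by norm_num; exact div_mul_cancel₀ 2 (hcos i hi)]
    simp [hn']
    ring
  | succ j _ ih =>
    rw [sum_congr rfl fun i hi ↦ two_div_cos_mul_cos_odd_succ j (hcos i hi), sum_sub_distrib,
      ← mul_sum, ih (by omega)]
    have hsum := one_add_two_mul_sum_cos_nat_mul_pi_div hn he (l := j) (by omega) (by omega)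
    have hsq : ((-1 : ℝ) ^ j) ^ 2 = 1 := by simp [← pow_mul]
    rw [pow_succ] at hsum ⊢
    push_cast
    linear_combination 2 * hsum + 2 * hsq

theorem HasDerivAt.nonpos_of_eventually_nhdsLT_le {f : ℝ → ℝ} {f' x : ℝ} (hf : HasDerivAt f f' x)
    (h : ∀ᶠ t in 𝓝[<] x, f x ≤ f t) : f' ≤ 0 := by
  have hslope := (hasDerivWithinAt_iff_tendsto_slope' (s := Set.Iio x) (lt_irrefl x)).1
    hf.hasDerivWithinAt
  refine le_of_tendsto hslope ?_
  filter_upwards [h, self_mem_nhdsWithin] with t hft htx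
  rw [slope_def_field]
  exact div_nonpos_of_nonneg_of_nonpos (sub_nonneg.2 hft) (sub_nonpos.2 (le_of_lt htx))

theorem cos_two_mul_sub_one_mul_pi_div_two (j : ℕ) : cos ((2 * j - 1) * (π / 2)) = 0 := by
  rw [show (2 * j - 1) * (π / 2) = j * π - π / 2 by ring, cos_nat_mul_pi_sub, cos_pi_div_two,
    mul_zero]

theorem sin_two_mul_sub_one_mul_pi_div_two (j : ℕ) :
    sin ((2 * j - 1) * (π / 2)) = (-1) ^ (j + 1) := by
  rw [show (2 * j - 1) * (π / 2) = j * π - π / 2 by ring, sin_nat_mul_pi_sub, sin_pi_div_two,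
    pow_succ]
  ring

theorem sum_mul_two_mul_sub_one_mul_neg_one_pow_nonneg (s : Finset ℕ) (a : ℕ → ℝ)
    (hpos : ∀ t ∈ Set.Ioo (0 : ℝ) (π / 2), 0 ≤ ∑ j ∈ s, a j * cos ((2 * j - 1) * t)) :
    0 ≤ ∑ j ∈ s, a j * ((2 * j - 1) * (-1) ^ (j + 1)) := by
  have hderiv : HasDerivAt (fun t ↦ ∑ j ∈ s, a j * cos ((2 * j - 1) * t))
      (∑ j ∈ s, -(a j * ((2 * j - 1) * (-1) ^ (j + 1)))) (π / 2) :=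
    HasDerivAt.fun_sum fun j _ ↦ (((hasDerivAt_id _).const_mul _).cos.const_mul (a j)).congr_deriv
      (by rw [sin_two_mul_sub_one_mul_pi_div_two]; ring)
  have hmin : ∀ᶠ t in 𝓝[<] (π / 2), ∑ j ∈ s, a j * cos ((2 * j - 1) * (π / 2)) ≤
      ∑ j ∈ s, a j * cos ((2 * j - 1) * t) := by
    filter_upwards [Ioo_mem_nhdsLT pi_div_two_pos] with t ht
    simpa [cos_two_mul_sub_one_mul_pi_div_two] using hpos t ht
  simpa [sum_neg_distrib] using hderiv.nonpos_of_eventually_nhdsLT_le hmin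

/-- If the odd-harmonic cosine polynomial is nonnegative on `(0, π/2)` and the
coefficients sum to 1, then `S(π/2) = Σ (−1)^{j+1} aⱼ ≥ 1/n`. -/
theorem stmt_8 (n : ℕ) (hn : 0 < n) (a : ℕ → ℝ)
    (hsum : (∑ j ∈ Finset.Icc 1 n, a j) = 1)
    (hpos : ∀ t ∈ Set.Ioo (0 : ℝ) (π / 2),
      0 ≤ ∑ j ∈ Finset.Icc 1 n, a j * Real.cos ((2 * j - 1) * t)) :
    (1 : ℝ) / n ≤ ∑ j ∈ Finset.Icc 1 n, (-1 : ℝ) ^ (j + 1) * a j := by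
  obtain ⟨q, e, he, hq⟩ : ∃ q e, e ≤ 1 ∧ n = 2 * q + 1 + e :=
    ⟨(n - 1) / 2, (n + 1) % 2, by omega, by omega⟩
  have hslope := sum_mul_two_mul_sub_one_mul_neg_one_pow_nonneg _ a hpos
  have hquad : 0 ≤ ∑ i ∈ Icc 1 q, 2 / cos (i * π / n) *
      ∑ j ∈ Icc 1 n, a j * cos ((2 * j - 1) * (i * π / n)) :=
    sum_nonneg fun i hi ↦
      mul_nonneg (div_nonneg zero_le_two (cos_nat_mul_pi_div_pos (by omega) hi).le)
        (hpos _ (nat_mul_pi_div_mem_Ioo (by omega) hi))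
  have hexpand : ∑ i ∈ Icc 1 q, 2 / cos (i * π / n) *
      ∑ j ∈ Icc 1 n, a j * cos ((2 * j - 1) * (i * π / n)) =
      n * ∑ j ∈ Icc 1 n, (-1 : ℝ) ^ (j + 1) * a j - ∑ j ∈ Icc 1 n, a j -
        e * ∑ j ∈ Icc 1 n, a j * ((2 * j - 1) * (-1) ^ (j + 1)) := by
    simp_rw [mul_sum]
    rw [sum_comm, ← sum_sub_distrib, ← sum_sub_distrib]
    refine sum_congr rfl fun j hj ↦ ?_
    have hsq : ((-1 : ℝ) ^ (j + 1)) ^ 2 = 1 := by simp [← pow_mul]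
    simp only [mul_left_comm _ (a j), ← mul_sum]
    rw [sum_two_div_cos_mul_cos_odd_mul_nat_mul_pi_div hq he (mem_Icc.1 hj).1 (mem_Icc.1 hj).2]
    linear_combination (-a j) * hsq
  have hn' : (0 : ℝ) < n := by exact_mod_cast hn
  rw [div_le_iff₀ hn']
  linarith [mul_nonneg (Nat.cast_nonneg e : (0 : ℝ) ≤ e) hslope]
end

section
/- Let n be a positive integer and let p_0^{(2)}(z) = Σ_{j=1}^n ((2(n−j)+1)/n²) z^{j−1}. Let s_{n,2n−1}(z) = z + Σ_{j=2}^{2n−1} ((2n−j)/(2n−1)) · sin(πj/2) · z^j be the Suffridge polynomial s_{k,m} with k = n and m = 2n−1 (note sin(nπ/(2n)) = 1). Then for every complex number z one has z · p_0^{(2)}(z²) = −i · ((2n−1)/n²) · s_{n,2n−1}(iz). -/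
open Real Finset

/-! Since `sin (π j / 2)` vanishes for even `j` and equals `(-1)^k` for `j = 2k + 1`, where it
cancels the sign of `i^(2k+1) = (-1)^k i`, the Suffridge polynomial evaluated at `i z` is
`i · ∑_{k<n} ((2n - 2k - 1)/(2n - 1)) z^(2k+1)`; after multiplying by `-i (2n-1)/n²` this is
`z p₀⁽²⁾(z²)` term by term. -/

theorem sum_range_two_mul {M : Type*} [AddCommMonoid M] (n : ℕ) (f : ℕ → M) :
    ∑ j ∈ range (2 * n), f j = ∑ k ∈ range n, (f (2 * k) + f (2 * k + 1)) := by
  induction n with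
  | zero => simp
  | succ n ih => rw [mul_add, mul_one, sum_range_succ, sum_range_succ, sum_range_succ, ih, add_assoc]

theorem mul_sum_Icc_sq_pow {R : Type*} [CommSemiring R] (n : ℕ) (a : ℕ → R) (z : R) :
    z * ∑ j ∈ Icc 1 n, a j * (z ^ 2) ^ (j - 1) = ∑ k ∈ range n, a (k + 1) * z ^ (2 * k + 1) := by
  rw [← Ico_add_one_right_eq_Icc, sum_Ico_eq_sum_range, Nat.add_sub_cancel, mul_sum]
  refine sum_congr rfl fun k _ => ?_
  rw [add_comm 1 k, Nat.add_sub_cancel, ← pow_mul]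
  ring

theorem ofReal_sin_pi_mul_div_two_mul_I_pow (j : ℕ) :
    (Real.sin (π * j / 2) : ℂ) * Complex.I ^ j = if Even j then 0 else Complex.I := by
  obtain ⟨k, rfl | rfl⟩ := Nat.even_or_odd' j
  · have : π * ((2 * k : ℕ) : ℝ) / 2 = k * π := by push_cast; ring
    rw [this, Real.sin_nat_mul_pi]
    simp
  · have : π * ((2 * k + 1 : ℕ) : ℝ) / 2 = k * π + π / 2 := by push_cast; ring
    rw [this, Real.sin_add_pi_div_two, Real.cos_nat_mul_pi, pow_succ, pow_mul, Complex.I_sq]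
    simp [← mul_assoc, ← mul_pow]

theorem sum_range_two_mul_sin_pi_mul_div_two (n : ℕ) (c : ℕ → ℝ) (z : ℂ) :
    ∑ j ∈ range (2 * n), ((c j * Real.sin (π * j / 2) : ℝ) : ℂ) * (Complex.I * z) ^ j =
      Complex.I * ∑ k ∈ range n, c (2 * k + 1) * z ^ (2 * k + 1) := by
  have term (j : ℕ) : ((c j * Real.sin (π * j / 2) : ℝ) : ℂ) * (Complex.I * z) ^ j =
      c j * z ^ j * ((Real.sin (π * j / 2) : ℂ) * Complex.I ^ j) := by
    push_cast
    ring
  simp only [term, ofReal_sin_pi_mul_div_two_mul_I_pow, sum_range_two_mul, mul_sum]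
  refine sum_congr rfl fun k _ => ?_
  rw [if_pos (even_two_mul k), if_neg (Nat.not_even_two_mul_add_one k)]
  ring

theorem I_mul_add_sum_Icc_sin_pi_mul_div_two {n : ℕ} (hn : 0 < n) (c : ℕ → ℝ) (hc : c 1 = 1)
    (z : ℂ) :
    Complex.I * z + ∑ j ∈ Icc 2 (2 * n - 1),
        ((c j * Real.sin (π * j / 2) : ℝ) : ℂ) * (Complex.I * z) ^ j =
      Complex.I * ∑ k ∈ range n, c (2 * k + 1) * z ^ (2 * k + 1) := by
  rw [← sum_range_two_mul_sin_pi_mul_div_two, ← sum_range_add_sum_Ico _ (by omega : 2 ≤ 2 * n),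
    ← Ico_add_one_right_eq_Icc, Nat.sub_add_cancel (by omega)]
  simp [sum_range_succ, hc]

theorem stmt_14_general (n : ℕ) (z : ℂ) :
    z * (∑ j ∈ Finset.Icc 1 n,
        (((2 * ((n : ℂ) - j) + 1) / n ^ 2) * (z ^ 2) ^ (j - 1))) =
      -Complex.I * (((2 * (n : ℂ) - 1) / n ^ 2) *
        ((Complex.I * z) + ∑ j ∈ Finset.Icc 2 (2 * n - 1),
          (((2 * (n : ℝ) - j) / (2 * (n : ℝ) - 1) * Real.sin (π * j / 2) : ℝ) : ℂ) *
            (Complex.I * z) ^ j)) := by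
  rcases Nat.eq_zero_or_pos n with rfl | hn
  · simp -- both sides vanish, the right one because `x / 0 = 0`
  have h2n : 2 * (n : ℝ) - 1 ≠ 0 := by
    have : (1 : ℝ) ≤ n := by exact_mod_cast hn
    linarith
  rw [I_mul_add_sum_Icc_sin_pi_mul_div_two hn _ (by simpa using div_self h2n),
    mul_sum_Icc_sq_pow, mul_sum, mul_sum, mul_sum]
  refine sum_congr rfl fun k _ => ?_
  have hcoeff : (2 * (n : ℂ) - 1) / n ^ 2 * ((2 * n - (2 * k + 1)) / (2 * n - 1)) =
      (2 * (n - (k + 1)) + 1) / n ^ 2 := by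
    have : (2 * (n : ℂ) - 1) ≠ 0 := by exact_mod_cast h2n
    field_simp
    ring
  push_cast
  linear_combination (-z ^ (2 * k + 1)) * hcoeff +
    ((2 * (n : ℂ) - 1) / n ^ 2 * ((2 * n - (2 * k + 1)) / (2 * n - 1)) * z ^ (2 * k + 1)) *
      Complex.I_mul_I

/-- Relation between `z·p₀⁽²⁾(z²)` and the Suffridge polynomial `s_{n,2n−1}`:
`z · p₀⁽²⁾(z²) = −i · ((2n−1)/n²) · s_{n,2n−1}(iz)`. -/
theorem stmt_14 (n : ℕ) (hn : 0 < n) (z : ℂ) :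
    z * (∑ j ∈ Finset.Icc 1 n,
        (((2 * ((n : ℂ) - j) + 1) / n ^ 2) * (z ^ 2) ^ (j - 1))) =
      -Complex.I * (((2 * (n : ℂ) - 1) / n ^ 2) *
        ((Complex.I * z) + ∑ j ∈ Finset.Icc 2 (2 * n - 1),
          (((2 * (n : ℝ) - j) / (2 * (n : ℝ) - 1) * Real.sin (π * j / 2) : ℝ) : ℂ) *
            (Complex.I * z) ^ j)) :=
  stmt_14_general n z
end

section
/- For every positive integer m and every real number t, Σ_{j=1}^m sin(2jt) = 2^m · (∏_{j=1}^m (cos t − cos(πj/(m+1)))) · sin(mt). -/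
/-!
Telescoping gives `sin t · ∑_{j=1}^m sin (2jt) = sin ((m+1)t) · sin (mt)`, and
`sin ((m+1)t) = U_m(cos t) · sin t` with the Chebyshev polynomial `U_m`, whose roots are the
nodes `cos (πj/(m+1))` and whose leading coefficient is `2^m`. Cancelling `sin t` gives the
identity; when `sin t = 0` both sides vanish.
-/

open Real Finset

section Chebyshev

open Polynomial Polynomial.Chebyshev

theorem Polynomial.Chebyshev.U_real_eq_C_mul_prod (n : ℕ) :
    U ℝ n =
      Polynomial.C (2 ^ n) * ∏ k ∈ range n, (X - Polynomial.C (cos ((k + 1) * π / (n + 1)))) := by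
  have hinj := (range n).nodup_map_iff_injOn.mp (roots_U_real_nodup n)
  have hcard : Multiset.card (U ℝ n).roots = (U ℝ n).natDegree := by
    rw [roots_U_real, natDegree_U_natCast, card_val, card_image_of_injOn hinj, card_range]
  rw [← C_leadingCoeff_mul_prod_multiset_X_sub_C hcard, leadingCoeff_U_natCast, roots_U_real,
    ← prod_eq_multiset_prod, prod_image hinj]

theorem Real.sin_nat_succ_mul_eq_prod (n : ℕ) (t : ℝ) :
    sin ((n + 1) * t) =
      2 ^ n * (∏ j ∈ Icc 1 n, (cos t - cos (π * j / (n + 1)))) * sin t := by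
  have h := U_real_cos t n
  rw [U_real_eq_C_mul_prod] at h
  simp only [eval_mul, eval_C, eval_prod, eval_sub, eval_X] at h
  rw [← Ico_add_one_right_eq_Icc, prod_Ico_eq_prod_range]
  push_cast at h
  rw [← h]
  congr 3 with k
  push_cast
  ring_nf

end Chebyshev

theorem Real.sin_mul_sum_sin_two_mul (m : ℕ) (t : ℝ) :
    sin t * ∑ j ∈ Icc 1 m, sin (2 * j * t) = sin ((m + 1) * t) * sin (m * t) := by
  induction m with
  | zero => simp
  | succ m ih =>
    rw [sum_Icc_succ_top (by omega), mul_add, ih]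
    set u := (m + 1 : ℝ) * t
    have h₁ : ((m + 1 : ℕ) + 1 : ℝ) * t = u + t := by push_cast; ring
    have h₂ : (m : ℝ) * t = u - t := by ring
    have h₃ : 2 * ((m + 1 : ℕ) : ℝ) * t = 2 * u := by push_cast; ring
    rw [h₁, h₂, h₃, Nat.cast_succ, sin_add, sin_sub, sin_two_mul]
    ring

theorem Real.sin_int_mul_eq_zero_of_sin_eq_zero {t : ℝ} (h : sin t = 0) (n : ℤ) :
    sin (n * t) = 0 := by
  obtain ⟨k, rfl⟩ := sin_eq_zero_iff.mp h
  rw [← mul_assoc, ← Int.cast_mul, sin_int_mul_pi]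

theorem stmt_15_general (m : ℕ) (t : ℝ) :
    (∑ j ∈ Finset.Icc 1 m, Real.sin (2 * j * t)) =
      2 ^ m * (∏ j ∈ Finset.Icc 1 m, (Real.cos t - Real.cos (π * j / (m + 1)))) *
        Real.sin (m * t) := by
  by_cases hs : sin t = 0
  · have hsin_nat (n : ℕ) : sin (n * t) = 0 := by
      exact_mod_cast sin_int_mul_eq_zero_of_sin_eq_zero hs n
    rw [hsin_nat m, mul_zero]
    exact sum_eq_zero fun j _ => by exact_mod_cast hsin_nat (2 * j)
  · refine mul_left_cancel₀ hs ?_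
    rw [sin_mul_sum_sin_two_mul, sin_nat_succ_mul_eq_prod]
    ring

/-- Multiplicative representation of the conjugate Dirichlet kernel in even
harmonics. -/
theorem stmt_15 (m : ℕ) (hm : 0 < m) (t : ℝ) :
    (∑ j ∈ Finset.Icc 1 m, Real.sin (2 * j * t)) =
      2 ^ m * (∏ j ∈ Finset.Icc 1 m, (Real.cos t - Real.cos (π * j / (m + 1)))) *
        Real.sin (m * t) :=
  stmt_15_general m t
end
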